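/- arXiv:2410.12413 — 6 statements merged into one kernel-verified Lean document; each statement's English description precedes it below -/
import Mathlib

section
/- Let {w_t}_{t=1}^k ⊂ R^d and define the regions R(l) as in the previous context. If l ≠ l' and the binary representations of l and l' contain the same number of ones, then R(l) and R(l') are disjoint. -/
/-- The open region of `ℝ^d` determined by the vectors `w` and the bit pattern `l`. -/
def region {k d : ℕ} (w : Fin k → Fin d → ℝ) (l : ℕ) : Set (Fin d → ℝ) :=
  {x | ∀ t0 t1 : Fin k, l.testBit t0 = false → l.testBit t1 = true →
    0 < ∑ j, (w t1 j - w t0 j) * x j}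

theorem region_disjoint_of_same_popcount {k d : ℕ} (w : Fin k → Fin d → ℝ)
    (l l' : ℕ) (hl : l < 2 ^ k) (hl' : l' < 2 ^ k) (hne : l ≠ l')
    (hcard : (Finset.univ.filter fun t : Fin k => l.testBit t = true).card =
      (Finset.univ.filter fun t : Fin k => l'.testBit t = true).card) :
    region w l ∩ region w l' = ∅ := by
  set A := Finset.univ.filter fun t : Fin k => l.testBit t = true with hA
  set B := Finset.univ.filter fun t : Fin k => l'.testBit t = true with hB
  have hAB : A ≠ B := by
    intro h
    apply hne
    apply Nat.eq_of_testBit_eq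
    intro i
    by_cases hik : i < k
    · have := Finset.ext_iff.mp h ⟨i, hik⟩
      simp only [hA, hB, Finset.mem_filter, Finset.mem_univ, true_and] at this
      cases h1 : l.testBit i <;> cases h2 : l'.testBit i <;> simp_all
    · have h1 : l.testBit i = false := Nat.testBit_lt_two_pow (lt_of_lt_of_le hl (Nat.pow_le_pow_right (by norm_num) (le_of_not_gt hik)))
      have h2 : l'.testBit i = false := Nat.testBit_lt_two_pow (lt_of_lt_of_le hl' (Nat.pow_le_pow_right (by norm_num) (le_of_not_gt hik)))
      rw [h1, h2]
  have hADB : (A \ B).Nonempty := by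
    rw [Finset.sdiff_nonempty]
    intro hsub
    exact hAB (Finset.eq_of_subset_of_card_le hsub (le_of_eq hcard.symm))
  have hBDA : (B \ A).Nonempty := by
    rw [Finset.sdiff_nonempty]
    intro hsub
    exact hAB (Finset.eq_of_subset_of_card_le hsub (le_of_eq hcard)).symm
  obtain ⟨a, ha⟩ := hADB
  obtain ⟨b, hb⟩ := hBDA
  simp only [hA, hB, Finset.mem_sdiff, Finset.mem_filter, Finset.mem_univ, true_and,
    Bool.not_eq_true] at ha hb
  ext x
  simp only [Set.mem_inter_iff, Set.mem_empty_iff_false, iff_false]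
  rintro ⟨hx1, hx2⟩
  have p1 := hx1 b a (by simpa using hb.2) ha.1
  have p2 := hx2 a b (by simpa using ha.2) hb.1
  have : (∑ j, (w a j - w b j) * x j) = -∑ j, (w b j - w a j) * x j := by
    rw [← Finset.sum_neg_distrib]
    congr 1; ext j; ring
  linarith [p1, p2, this]
end

section
/- For k > 2, any family of hyperplane-defined regions {R(l)}_{l ∈ [2^k]} (defined by a vector set {w_t}_{t=1}^k in R^d) in which every R(l) is non-empty must contain at least ⌊(√2)^k⌋ pairwise disjoint regions. -/
/-!
The region `R(l)` requires `(w t₁ - w t₀) ⬝ x > 0` whenever bit `t₁` of `l` is set and bit `t₀`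
is not. If `l ≠ l'` have the same number of set bits, some bit `t` is set in `l` but not in `l'`
and some bit `s` is set in `l'` but not in `l`, so `R(l)` and `R(l')` prescribe opposite signs for
`(w t - w s) ⬝ x` and are disjoint. Encoding the `⌊k/2⌋`-subsets of `{0, …, k-1}` as bit patterns
thus gives `choose k ⌊k/2⌋` pairwise disjoint regions, and
`choose (k+2) ⌊(k+2)/2⌋ ≥ 2 · choose k ⌊k/2⌋` yields `choose k ⌊k/2⌋ ^ 2 ≥ 2 ^ k` for `k ≥ 2`.
-/

open Finset

theorem Nat.testBit_sum_two_pow (s : Finset ℕ) (i : ℕ) :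
    (∑ j ∈ s, 2 ^ j).testBit i = decide (i ∈ s) := by
  rw [Bool.eq_iff_iff, ← Nat.mem_bitIndices, ← List.mem_toFinset, toFinset_bitIndices_sum_two_pow,
    decide_eq_true_iff]

theorem Finset.exists_mem_notMem_of_card_eq_of_ne {α : Type*} {s t : Finset α}
    (hst : #s = #t) (hne : s ≠ t) : ∃ a ∈ s, a ∉ t :=
  not_subset.1 fun hsub ↦ hne (eq_of_subset_of_card_le hsub hst.ge)

theorem two_mul_choose_half_le_choose_add_two_half (k : ℕ) :
    2 * k.choose (k / 2) ≤ (k + 2).choose ((k + 2) / 2) := by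
  have hhalf : (k + 2) / 2 = k / 2 + 1 := by omega
  have hmono : k.choose (k / 2) ≤ (k + 1).choose (k / 2) := Nat.choose_le_choose _ k.le_succ
  rw [hhalf, Nat.choose_succ_succ (k + 1), Nat.choose_succ_succ k]
  omega

theorem two_pow_le_choose_half_sq {k : ℕ} (hk : 2 ≤ k) : 2 ^ k ≤ k.choose (k / 2) ^ 2 := by
  obtain ⟨n, rfl⟩ := Nat.exists_eq_add_of_le' hk
  clear hk
  induction n using Nat.twoStepInduction with
  | zero => decide
  | one => decide
  | more n ih _ =>
    calc 2 ^ (n + 2 + 2) = 2 ^ 2 * 2 ^ (n + 2) := by ring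
      _ ≤ 2 ^ 2 * (n + 2).choose ((n + 2) / 2) ^ 2 := Nat.mul_le_mul_left _ ih
      _ = (2 * (n + 2).choose ((n + 2) / 2)) ^ 2 := by ring
      _ ≤ (n + 2 + 2).choose ((n + 2 + 2) / 2) ^ 2 :=
        Nat.pow_le_pow_left (two_mul_choose_half_le_choose_add_two_half _) 2

theorem floor_sqrt_two_pow_le_choose_half {k : ℕ} (hk : 2 ≤ k) :
    ⌊Real.sqrt 2 ^ k⌋₊ ≤ k.choose (k / 2) := by
  refine Nat.floor_le_of_le <|
    (pow_le_pow_iff_left₀ (by positivity) (by positivity) two_ne_zero).1 ?_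
  rw [← pow_mul, mul_comm, pow_mul, Real.sq_sqrt zero_le_two]
  exact_mod_cast two_pow_le_choose_half_sq hk

theorem disjoint_region_of_testBit {k d : ℕ} (w : Fin k → Fin d → ℝ) {l l' : ℕ} {s t : Fin k}
    (hls : l.testBit s = false) (hlt : l.testBit t = true)
    (hl's : l'.testBit s = true) (hl't : l'.testBit t = false) :
    Disjoint (region w l) (region w l') := by
  refine Set.disjoint_left.2 fun x hx hx' ↦ ?_
  have hpos := add_pos (hx s t hls hlt) (hx' t s hl't hl's)
  rw [← sum_add_distrib] at hpos
  simp [sub_mul] at hpos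

theorem disjoint_region_sum_two_pow {k d : ℕ} (w : Fin k → Fin d → ℝ) {A B : Finset ℕ}
    (hA : A ⊆ range k) (hB : B ⊆ range k) (hcard : #A = #B) (hne : A ≠ B) :
    Disjoint (region w (∑ i ∈ A, 2 ^ i)) (region w (∑ i ∈ B, 2 ^ i)) := by
  obtain ⟨t, htA, htB⟩ := exists_mem_notMem_of_card_eq_of_ne hcard hne
  obtain ⟨s, hsB, hsA⟩ := exists_mem_notMem_of_card_eq_of_ne hcard.symm hne.symm
  refine disjoint_region_of_testBit w (s := ⟨s, mem_range.1 (hB hsB)⟩)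
    (t := ⟨t, mem_range.1 (hA htA)⟩) ?_ ?_ ?_ ?_ <;>
    simp [Nat.testBit_sum_two_pow, *]

theorem exists_many_pairwise_disjoint_regions_general {k d : ℕ} (hk : 2 < k)
    (w : Fin k → Fin d → ℝ) :
    ∃ S : Finset ℕ, S ⊆ Finset.range (2 ^ k) ∧
      ⌊Real.sqrt 2 ^ k⌋₊ ≤ S.card ∧
      (S : Set ℕ).Pairwise fun l l' => region w l ∩ region w l' = ∅ := by
  let bitPattern : Finset ℕ ↪ ℕ := ⟨fun A ↦ ∑ i ∈ A, 2 ^ i, geomSum_injective le_rfl⟩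
  refine ⟨((range k).powersetCard (k / 2)).map bitPattern, ?_, ?_, ?_⟩
  · intro l hl
    obtain ⟨A, hA, rfl⟩ := mem_map.1 hl
    exact mem_range.2 <|
      Nat.geomSum_lt le_rfl fun i hi ↦ mem_range.1 ((mem_powersetCard.1 hA).1 hi)
  · rw [card_map, card_powersetCard, card_range]
    exact floor_sqrt_two_pow_le_choose_half hk.le
  · rintro _ hl _ hl' hne
    obtain ⟨A, hA, rfl⟩ := mem_map.1 hl
    obtain ⟨B, hB, rfl⟩ := mem_map.1 hl'
    rw [mem_powersetCard] at hA hB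
    exact Set.disjoint_iff_inter_eq_empty.1 <| disjoint_region_sum_two_pow w hA.1 hB.1
      (hA.2.trans hB.2.symm) fun hAB ↦ hne (congrArg bitPattern hAB)

theorem exists_many_pairwise_disjoint_regions {k d : ℕ} (hk : 2 < k)
    (w : Fin k → Fin d → ℝ) (hne : ∀ l < 2 ^ k, (region w l).Nonempty) :
    ∃ S : Finset ℕ, S ⊆ Finset.range (2 ^ k) ∧
      ⌊Real.sqrt 2 ^ k⌋₊ ≤ S.card ∧
      (S : Set ℕ).Pairwise fun l l' => region w l ∩ region w l' = ∅ :=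
  exists_many_pairwise_disjoint_regions_general hk w
end

section
/- The maximum number of regions into which m hyperplanes can partition R^d equals the sum over j = 0 to d of binom(m, j), where binom(m, j) = 0 when j > m. -/
open scoped RealInnerProductSpace

/-!
The regions of an arrangement of hyperplanes `{f i = 0}` are the nonempty sets on which every
`f i` has a fixed nonzero sign: such a set is open and convex, hence connected, so regions are
counted by their sign vectors. Pick the last hyperplane `H`. A region of the other hyperplanes
either misses `H` or is cut by it into two regions, and the regions it cuts are exactly the
regions of the arrangement induced on `H`, a space of one dimension less. This gives
`r(m, d) = r(m - 1, d) + r_H(m - 1, d - 1)`, and Pascal's rule turns it into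
`r ≤ ∑_{j ≤ d} C(m, j)`, with equality for hyperplanes in general position, a property that
passes to the smaller and to the induced arrangement. The hyperplanes `⟪(t, t², …, tᵈ), x⟫ = 1`
for distinct nonzero `t` are in general position by a Vandermonde argument.
-/

open Set Filter Topology

namespace HyperplaneArrangement

variable {ι V W : Type*} [AddCommGroup V] [Module ℝ V] [AddCommGroup W] [Module ℝ W]

noncomputable def signVector (f : ι → V →ᵃ[ℝ] ℝ) (x : V) : ι → SignType :=
  fun i => SignType.sign (f i x)

def regionSigns (f : ι → V →ᵃ[ℝ] ℝ) (P : Set V) : Set (ι → SignType) :=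
  {s | (∀ i, s i ≠ 0) ∧ ∃ x ∈ P, signVector f x = s}

@[simp]
lemma signVector_apply (f : ι → V →ᵃ[ℝ] ℝ) (x : V) (i : ι) :
    signVector f x i = SignType.sign (f i x) :=
  rfl

lemma convex_setOf_sign_eq (σ : SignType) : Convex ℝ {y : ℝ | SignType.sign y = σ} := by
  cases σ
  · simp [sign_eq_zero_iff]
  · have : {y : ℝ | SignType.sign y = SignType.neg} = Iio 0 := by
      ext; simp [sign_eq_neg_one_iff]
    rw [this]
    exact convex_Iio 0
  · have : {y : ℝ | SignType.sign y = SignType.pos} = Ioi 0 := by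
      ext; simp [sign_eq_one_iff]
    rw [this]
    exact convex_Ioi 0

lemma convex_setOf_signVector_eq (f : ι → V →ᵃ[ℝ] ℝ) (s : ι → SignType) :
    Convex ℝ {x | signVector f x = s} := by
  have : {x | signVector f x = s} = ⋂ i, f i ⁻¹' {y | SignType.sign y = s i} := by
    ext x
    simp [funext_iff]
  rw [this]
  exact convex_iInter fun i => (convex_setOf_sign_eq (s i)).affine_preimage (f i)

lemma regionSigns_comp (f : ι → V →ᵃ[ℝ] ℝ) (e : W →ᵃ[ℝ] V) (P : Set W) :
    regionSigns (fun i => (f i).comp e) P = regionSigns f (e '' P) := by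
  ext s
  simp only [regionSigns, mem_ofPred_eq, exists_mem_image]
  rfl

lemma _root_.AffineMap.apply_add_smul (φ : V →ᵃ[ℝ] ℝ) (x u : V) (t : ℝ) :
    φ (x + t • u) = φ x + t * φ.linear u := by
  rw [add_comm x, ← vadd_eq_add, φ.map_vadd, vadd_eq_add, map_smul, smul_eq_mul, add_comm]

lemma sum_smul_apply (I : Finset ι) (c : ι → ℝ) (F : ι → V →ᵃ[ℝ] ℝ) (x : V) :
    (∑ i ∈ I, c i • F i) x = ∑ i ∈ I, c i * F i x := by
  classical
  induction I using Finset.induction_on with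
  | empty => simp
  | insert j I hj ih => simp [Finset.sum_insert hj, ih]

lemma eventually_signVector_add_smul [Finite ι] {f : ι → V →ᵃ[ℝ] ℝ} {x : V}
    (hx : ∀ i, f i x ≠ 0) (u : V) :
    ∀ᶠ t in 𝓝 (0 : ℝ), signVector f (x + t • u) = signVector f x := by
  simp only [funext_iff, signVector_apply]
  refine eventually_all.2 fun i => ?_
  have hcont : Continuous fun t : ℝ => f i (x + t • u) := by
    simp only [AffineMap.apply_add_smul]
    fun_prop
  have hsign : ContinuousAt (fun t : ℝ => SignType.sign (f i (x + t • u))) 0 :=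
    (continuousAt_sign_of_ne_zero (by simpa using hx i)).comp hcont.continuousAt
  exact hsign.eventually_mem ((isOpen_discrete {SignType.sign (f i x)}).mem_nhds (by simp))

lemma exists_lineMap_eq_zero (g : V →ᵃ[ℝ] ℝ) {x y : V} (hx : 0 < g x) (hy : g y < 0) :
    ∃ t ∈ Icc (0 : ℝ) 1, g (AffineMap.lineMap y x t) = 0 := by
  refine ⟨g y / (g y - g x), ⟨div_nonneg_of_nonpos hy.le (by linarith),
    (div_le_one_of_neg (by linarith)).2 (by linarith)⟩, ?_⟩
  have hne : g y - g x ≠ 0 := (by linarith : g y - g x < 0).ne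
  rw [AffineMap.apply_lineMap, AffineMap.lineMap_apply_ring']
  field_simp
  ring

lemma ncard_regionSigns_eq_one {f : ι → V →ᵃ[ℝ] ℝ} {x : V} (hx : ∀ i, f i x ≠ 0)
    (hconst : ∀ y, signVector f y = signVector f x) : (regionSigns f univ).ncard = 1 := by
  refine ncard_eq_one.2 ⟨signVector f x, ?_⟩
  ext s
  constructor
  · rintro ⟨-, y, -, rfl⟩
    exact hconst y
  · rintro rfl
    exact ⟨fun i => by simpa using hx i, x, trivial, rfl⟩

section DeletionRestriction

variable {m : ℕ} {f : Fin (m + 1) → V →ᵃ[ℝ] ℝ}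

lemma signVector_init (f : Fin (m + 1) → V →ᵃ[ℝ] ℝ) (x : V) :
    signVector (Fin.init f) x = Fin.init (signVector f x) :=
  rfl

lemma signVector_eq_snoc (f : Fin (m + 1) → V →ᵃ[ℝ] ℝ) (x : V) :
    signVector f x = Fin.snoc (signVector (Fin.init f) x) (SignType.sign (f (Fin.last m) x)) :=
  (Fin.snoc_init_self _).symm

lemma exists_signVector_eq_snoc (hg : (f (Fin.last m)).linear ≠ 0) {x : V}
    (hx : ∀ i, Fin.init f i x ≠ 0) (hx0 : f (Fin.last m) x = 0) (ε : SignType) :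
    ∃ y, signVector f y = Fin.snoc (signVector (Fin.init f) x) ε := by
  obtain ⟨u, hu⟩ := LinearMap.surjective hg (ε : ℝ)
  obtain ⟨δ, hδ, hnear⟩ := Metric.eventually_nhds_iff.1 (eventually_signVector_add_smul hx u)
  have hdist : dist (δ / 2) 0 < δ := by
    rw [Real.dist_0_eq_abs, abs_of_pos (half_pos hδ)]
    linarith
  refine ⟨x + (δ / 2) • u, funext fun i => ?_⟩
  induction i using Fin.lastCases with
  | last =>
    rw [Fin.snoc_last, signVector_apply, AffineMap.apply_add_smul, hx0, hu, zero_add]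
    cases ε <;> simp [hδ]
  | cast i =>
    rw [Fin.snoc_castSucc]
    exact congrFun (hnear hdist) i

variable (f) in
def sideSigns (ε : SignType) : Set (Fin m → SignType) :=
  Fin.init '' {s ∈ regionSigns f univ | s (Fin.last m) = ε}

lemma mem_sideSigns {s : Fin m → SignType} {ε : SignType} :
    s ∈ sideSigns f ε ↔ (∀ i, s i ≠ 0) ∧ ε ≠ 0 ∧ ∃ x, signVector f x = Fin.snoc s ε := by
  constructor
  · rintro ⟨s, ⟨⟨hs, x, -, hx⟩, rfl⟩, rfl⟩
    exact ⟨fun i => hs _, hs _, x, by rw [hx, Fin.snoc_init_self]⟩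
  · rintro ⟨hs, hε, x, hx⟩
    refine ⟨Fin.snoc s ε, ⟨⟨Fin.forall_fin_succ'.2 ⟨by simpa using hs, by simpa using hε⟩,
      x, trivial, hx⟩, by simp⟩, Fin.init_snoc _ _⟩

lemma sideSigns_union (hg : (f (Fin.last m)).linear ≠ 0) :
    sideSigns f 1 ∪ sideSigns f (-1) = regionSigns (Fin.init f) univ := by
  ext s
  simp only [mem_union, mem_sideSigns]
  constructor
  · rintro (⟨hs, -, x, hx⟩ | ⟨hs, -, x, hx⟩) <;>
      exact ⟨hs, x, trivial, by rw [signVector_init, hx, Fin.init_snoc]⟩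
  · rintro ⟨hs, x, -, rfl⟩
    rcases h : SignType.sign (f (Fin.last m) x) with _ | _ | _
    · obtain ⟨y, hy⟩ := exists_signVector_eq_snoc hg (fun i => by simpa using hs i)
        (sign_eq_zero_iff.1 h) 1
      exact Or.inl ⟨hs, one_ne_zero, y, hy⟩
    · exact Or.inr ⟨hs, by decide, x, by rw [signVector_eq_snoc, h]; rfl⟩
    · exact Or.inl ⟨hs, one_ne_zero, x, by rw [signVector_eq_snoc, h]; rfl⟩

lemma sideSigns_inter (hg : (f (Fin.last m)).linear ≠ 0) :
    sideSigns f 1 ∩ sideSigns f (-1) = regionSigns (Fin.init f) {x | f (Fin.last m) x = 0} := by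
  ext s
  simp only [mem_inter_iff, mem_sideSigns]
  constructor
  · rintro ⟨⟨hs, -, x, hx⟩, ⟨-, -, y, hy⟩⟩
    have hpos : 0 < f (Fin.last m) x :=
      sign_eq_one_iff.1 (by simpa using congrFun hx (Fin.last m))
    have hneg : f (Fin.last m) y < 0 :=
      sign_eq_neg_one_iff.1 (by simpa using congrFun hy (Fin.last m))
    obtain ⟨t, ht, hzero⟩ := exists_lineMap_eq_zero _ hpos hneg
    have hxs : signVector (Fin.init f) x = s := by rw [signVector_init, hx, Fin.init_snoc]
    have hys : signVector (Fin.init f) y = s := by rw [signVector_init, hy, Fin.init_snoc]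
    exact ⟨hs, _, hzero, (convex_setOf_signVector_eq (Fin.init f) s).lineMap_mem hys hxs ht⟩
  · rintro ⟨hs, x, hx0, rfl⟩
    have hx : ∀ i, Fin.init f i x ≠ 0 := fun i => by simpa using hs i
    exact ⟨⟨hs, one_ne_zero, exists_signVector_eq_snoc hg hx hx0 1⟩,
      ⟨hs, by decide, exists_signVector_eq_snoc hg hx hx0 (-1)⟩⟩

variable (f) in
lemma ncard_regionSigns_eq_ncard_sideSigns_add :
    (regionSigns f univ).ncard = (sideSigns f 1).ncard + (sideSigns f (-1)).ncard := by
  have hinit (ε : SignType) :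
      InjOn Fin.init {s : Fin (m + 1) → SignType | s (Fin.last m) = ε} :=
    fun s hs s' hs' h => by rw [← Fin.snoc_init_self s, ← Fin.snoc_init_self s', h, hs, hs']
  have hsplit : regionSigns f univ = {s ∈ regionSigns f univ | s (Fin.last m) = 1} ∪
      {s ∈ regionSigns f univ | s (Fin.last m) = -1} := by
    ext s
    refine ⟨fun hs => ?_, by rintro (⟨hs, -⟩ | ⟨hs, -⟩) <;> exact hs⟩
    rcases h : s (Fin.last m) with _ | _ | _
    · exact absurd h (hs.1 _)
    · exact Or.inr ⟨hs, h⟩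
    · exact Or.inl ⟨hs, h⟩
  rw [hsplit, ncard_union_eq, sideSigns, sideSigns,
    ((hinit _).mono fun s hs => hs.2).ncard_image, ((hinit _).mono fun s hs => hs.2).ncard_image]
  exact disjoint_left.2 fun s hs hs' => by simp [hs.2] at hs'

variable (f) in
theorem ncard_regionSigns_eq_add (hg : (f (Fin.last m)).linear ≠ 0) :
    (regionSigns f univ).ncard = (regionSigns (Fin.init f) univ).ncard +
      (regionSigns (Fin.init f) {x | f (Fin.last m) x = 0}).ncard := by
  rw [ncard_regionSigns_eq_ncard_sideSigns_add, ← sideSigns_union hg, ← sideSigns_inter hg,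
    ncard_union_add_ncard_inter]

lemma ncard_regionSigns_le_of_linear_eq_zero (hg : (f (Fin.last m)).linear = 0) :
    (regionSigns f univ).ncard ≤ (regionSigns (Fin.init f) univ).ncard := by
  have hconst (z : V) : f (Fin.last m) z = f (Fin.last m) 0 := by
    rw [AffineMap.decomp]
    simp [hg]
  refine ncard_le_ncard_of_injOn Fin.init ?_ ?_
  · rintro _ ⟨hs, x, -, rfl⟩
    exact ⟨fun i => hs _, x, trivial, rfl⟩
  · rintro _ ⟨-, x, -, rfl⟩ _ ⟨-, y, -, rfl⟩ h
    rw [signVector_eq_snoc f x, signVector_eq_snoc f y, hconst x, hconst y]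
    exact congrArg (Fin.snoc · _) h

end DeletionRestriction

def levelSetParam (g : V →ᵃ[ℝ] ℝ) (p : V) : LinearMap.ker g.linear →ᵃ[ℝ] V where
  toFun w := w + p
  linear := (LinearMap.ker g.linear).subtype
  map_vadd' w v := by simp [add_assoc]

@[simp]
lemma levelSetParam_apply (g : V →ᵃ[ℝ] ℝ) (p : V) (w : LinearMap.ker g.linear) :
    levelSetParam g p w = w + p :=
  rfl

lemma range_levelSetParam (g : V →ᵃ[ℝ] ℝ) (p : V) :
    range (levelSetParam g p) = {x | g x = g p} := by
  ext x
  constructor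
  · rintro ⟨w, rfl⟩
    rw [mem_ofPred_eq, levelSetParam_apply, ← vadd_eq_add, g.map_vadd, LinearMap.mem_ker.1 w.2,
      zero_vadd]
  · intro hx
    refine ⟨⟨x - p, ?_⟩, sub_add_cancel x p⟩
    rw [LinearMap.mem_ker, ← vsub_eq_sub, AffineMap.linearMap_vsub, hx, vsub_self]

lemma regionSigns_levelSetParam {m : ℕ} (f : Fin (m + 1) → V →ᵃ[ℝ] ℝ) {p : V}
    (hp : f (Fin.last m) p = 0) :
    regionSigns (fun i => (Fin.init f i).comp (levelSetParam (f (Fin.last m)) p)) univ =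
      regionSigns (Fin.init f) {x | f (Fin.last m) x = 0} := by
  rw [regionSigns_comp, image_univ, range_levelSetParam, hp]

lemma exists_apply_eq_zero {g : V →ᵃ[ℝ] ℝ} (hg : g.linear ≠ 0) : ∃ p, g p = 0 :=
  g.linear_surjective_iff.1 (LinearMap.surjective hg) 0

lemma sum_range_succ_choose_zero (n : ℕ) : ∑ j ∈ Finset.range (n + 1), (0 : ℕ).choose j = 1 := by
  rw [Finset.sum_range_succ']
  simp

lemma sum_range_succ_choose_succ (m n : ℕ) :
    ∑ j ∈ Finset.range (n + 1), (m + 1).choose j =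
      ∑ j ∈ Finset.range (n + 1), m.choose j + ∑ j ∈ Finset.range n, m.choose j := by
  rw [Finset.sum_range_succ', Finset.sum_range_succ' (fun j => m.choose j)]
  simp only [Nat.choose_succ_succ, Finset.sum_add_distrib, Nat.choose_zero_right]
  ring

theorem ncard_regionSigns_le [FiniteDimensional ℝ V] {m : ℕ} (f : Fin m → V →ᵃ[ℝ] ℝ) :
    (regionSigns f univ).ncard ≤ ∑ j ∈ Finset.range (Module.finrank ℝ V + 1), m.choose j := by
  induction m generalizing V with
  | zero => exact (ncard_le_one_of_subsingleton _).trans (sum_range_succ_choose_zero _).ge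
  | succ m ih =>
    by_cases hg : (f (Fin.last m)).linear = 0
    · calc (regionSigns f univ).ncard ≤ (regionSigns (Fin.init f) univ).ncard :=
            ncard_regionSigns_le_of_linear_eq_zero hg
        _ ≤ ∑ j ∈ Finset.range (Module.finrank ℝ V + 1), m.choose j := ih _
        _ ≤ ∑ j ∈ Finset.range (Module.finrank ℝ V + 1), (m + 1).choose j :=
            Finset.sum_le_sum fun j _ => Nat.choose_le_choose j m.le_succ
    · obtain ⟨p, hp⟩ := exists_apply_eq_zero hg
      rw [ncard_regionSigns_eq_add f hg, ← regionSigns_levelSetParam f hp,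
        sum_range_succ_choose_succ]
      refine add_le_add (ih _) ?_
      rw [← Module.Dual.finrank_ker_add_one_of_ne_zero hg]
      exact ih _

section GeneralPosition

variable {κ : Type*}

lemma linearIndepOn_comp_of_forall_card_le {R M : Type*} [Ring R] [AddCommGroup M] [Module R M]
    {v : ι → M} {k : ℕ} (hv : ∀ I : Finset ι, I.card ≤ k → LinearIndepOn R v (I : Set ι))
    {e : κ → ι} (he : Function.Injective e) (I : Finset κ) (hI : I.card ≤ k) :
    LinearIndepOn R (v ∘ e) (I : Set κ) := by
  have h := hv (I.map ⟨e, he⟩) (by simpa using hI)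
  rw [Finset.coe_map] at h
  exact h.comp_of_image he.injOn

lemma linearIndepOn_comp_castSucc_of_ker_le {K M N : Type*} [DivisionRing K] [AddCommGroup M]
    [Module K M] [AddCommGroup N] [Module K N] {m k : ℕ} {v : Fin (m + 1) → M}
    (hv : ∀ I : Finset (Fin (m + 1)), I.card ≤ k + 1 → LinearIndepOn K v (I : Set (Fin (m + 1))))
    {L : M →ₗ[K] N} (hL : LinearMap.ker L ≤ K ∙ v (Fin.last m)) (I : Finset (Fin m))
    (hI : I.card ≤ k) : LinearIndepOn K (L ∘ v ∘ Fin.castSucc) (I : Set (Fin m)) := by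
  classical
  set J : Set (Fin (m + 1)) := Fin.castSucc '' I
  have hlast : Fin.last m ∉ I.map Fin.castSuccEmb := by simp [Fin.castSucc_ne_last]
  have h := hv (insert (Fin.last m) (I.map Fin.castSuccEmb))
    (by rw [Finset.card_insert_of_notMem hlast, Finset.card_map]; omega)
  rw [Finset.coe_insert, linearIndepOn_insert (by exact_mod_cast hlast), Finset.coe_map] at h
  have hdisj : Disjoint (Submodule.span K (range fun x : J => v x)) (LinearMap.ker L) := by
    rw [← image_eq_range]
    exact (Submodule.disjoint_span_singleton.2 fun hmem => (h.2 hmem).elim).mono_right hL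
  have hmap : LinearIndepOn K (L ∘ v) J := h.1.map hdisj
  exact hmap.comp_of_image (Fin.castSucc_injective m).injOn

lemma mem_span_singleton_of_ker_le {K E : Type*} [Field K] [AddCommGroup E] [Module K E]
    {g φ : E →ₗ[K] K} (h : LinearMap.ker g ≤ LinearMap.ker φ) : φ ∈ K ∙ g := by
  have := mem_span_of_iInf_ker_le_ker (L := fun _ : Unit => g) (by simpa using h)
  rwa [range_const] at this

lemma ker_dualRestrict_ker_le (g : Module.Dual ℝ V) :
    LinearMap.ker (LinearMap.ker g).dualRestrict ≤ ℝ ∙ g := by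
  intro φ hφ
  rw [Submodule.dualRestrict_ker_eq_dualAnnihilator, Submodule.mem_dualAnnihilator] at hφ
  exact mem_span_singleton_of_ker_le hφ

def precomp (e : W →ᵃ[ℝ] V) : (V →ᵃ[ℝ] ℝ) →ₗ[ℝ] (W →ᵃ[ℝ] ℝ) where
  toFun φ := φ.comp e
  map_add' _ _ := rfl
  map_smul' _ _ := rfl

lemma ker_precomp_levelSetParam_le {g : V →ᵃ[ℝ] ℝ} {p : V} (hp : g p = 0) :
    LinearMap.ker (precomp (levelSetParam g p)) ≤ ℝ ∙ g := by
  intro φ hφ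
  have hφ' (w : LinearMap.ker g.linear) : φ (w + p) = 0 :=
    congrArg (fun ψ : LinearMap.ker g.linear →ᵃ[ℝ] ℝ => ψ w) (LinearMap.mem_ker.1 hφ)
  have hφp : φ p = 0 := by simpa using hφ' 0
  have hlin : LinearMap.ker g.linear ≤ LinearMap.ker φ.linear := fun w hw => by
    have := hφ' ⟨w, hw⟩
    rwa [← vadd_eq_add, φ.map_vadd, hφp, vadd_eq_add, add_zero] at this
  obtain ⟨μ, hμ⟩ := Submodule.mem_span_singleton.1 (mem_span_singleton_of_ker_le hlin)
  refine Submodule.mem_span_singleton.2 ⟨μ, AffineMap.ext_linear (p := p) ?_ ?_⟩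
  · rw [AffineMap.smul_linear, hμ]
  · simp [hp, hφp]

/-- Any `k ≤ dim V` of the hyperplanes meet in a flat of codimension `k`, and no `dim V + 1` of
them have a common point. -/
structure InGeneralPosition (f : ι → V →ᵃ[ℝ] ℝ) : Prop where
  linearIndepOn_linear : ∀ I : Finset ι, I.card ≤ Module.finrank ℝ V →
    LinearIndepOn ℝ (fun i => (f i).linear) (I : Set ι)
  linearIndepOn : ∀ I : Finset ι, I.card ≤ Module.finrank ℝ V + 1 →
    LinearIndepOn ℝ f (I : Set ι)

lemma InGeneralPosition.comp {f : ι → V →ᵃ[ℝ] ℝ} (hf : InGeneralPosition f) {e : κ → ι}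
    (he : Function.Injective e) : InGeneralPosition (f ∘ e) :=
  ⟨linearIndepOn_comp_of_forall_card_le hf.linearIndepOn_linear he,
    linearIndepOn_comp_of_forall_card_le hf.linearIndepOn he⟩

lemma InGeneralPosition.restrict [FiniteDimensional ℝ V] {m : ℕ} {f : Fin (m + 1) → V →ᵃ[ℝ] ℝ}
    (hf : InGeneralPosition f) (hg : (f (Fin.last m)).linear ≠ 0) {p : V}
    (hp : f (Fin.last m) p = 0) :
    InGeneralPosition fun i => (Fin.init f i).comp (levelSetParam (f (Fin.last m)) p) := by
  have hW := Module.Dual.finrank_ker_add_one_of_ne_zero hg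
  constructor
  · have : (fun i => ((Fin.init f i).comp (levelSetParam (f (Fin.last m)) p)).linear) =
        (LinearMap.ker (f (Fin.last m)).linear).dualRestrict ∘ (fun j => (f j).linear) ∘
          Fin.castSucc := by
      funext i
      ext w
      simp [levelSetParam, Fin.init]
    rw [this]
    exact linearIndepOn_comp_castSucc_of_ker_le
      (fun J hJ => hf.linearIndepOn_linear J (hW ▸ hJ)) (ker_dualRestrict_ker_le _)
  · have : (fun i => (Fin.init f i).comp (levelSetParam (f (Fin.last m)) p)) =
        precomp (levelSetParam (f (Fin.last m)) p) ∘ f ∘ Fin.castSucc := rfl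
    rw [this]
    exact linearIndepOn_comp_castSucc_of_ker_le (fun J hJ => hf.linearIndepOn J (hW ▸ hJ))
      (ker_precomp_levelSetParam_le hp)

lemma InGeneralPosition.linear_ne_zero {f : ι → V →ᵃ[ℝ] ℝ} (hf : InGeneralPosition f) (i : ι)
    (hV : 0 < Module.finrank ℝ V) : (f i).linear ≠ 0 :=
  (hf.linearIndepOn_linear {i} (by simpa using hV.nat_succ_le)).ne_zero (by simp)

lemma InGeneralPosition.apply_ne_zero [Subsingleton V] {f : ι → V →ᵃ[ℝ] ℝ}
    (hf : InGeneralPosition f) (i : ι) (x : V) : f i x ≠ 0 := by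
  have hfi : f i ≠ 0 := (hf.linearIndepOn {i} (by simp)).ne_zero (by simp)
  contrapose! hfi
  ext y
  rw [Subsingleton.elim y x, hfi]
  rfl

theorem ncard_regionSigns_of_inGeneralPosition [FiniteDimensional ℝ V] {m : ℕ}
    {f : Fin m → V →ᵃ[ℝ] ℝ} (hf : InGeneralPosition f) :
    (regionSigns f univ).ncard = ∑ j ∈ Finset.range (Module.finrank ℝ V + 1), m.choose j := by
  induction m generalizing V with
  | zero =>
    rw [sum_range_succ_choose_zero]
    exact ncard_regionSigns_eq_one (x := 0) finZeroElim fun _ => Subsingleton.elim _ _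
  | succ m ih =>
    rcases (Module.finrank ℝ V).eq_zero_or_pos with hV | hV
    · have : Subsingleton V := Module.finrank_zero_iff.1 hV
      rw [hV, zero_add, Finset.sum_range_one, Nat.choose_zero_right]
      exact ncard_regionSigns_eq_one (hf.apply_ne_zero · 0) fun y => by rw [Subsingleton.elim y 0]
    · have hg := hf.linear_ne_zero (Fin.last m) hV
      obtain ⟨p, hp⟩ := exists_apply_eq_zero hg
      rw [ncard_regionSigns_eq_add f hg, ← regionSigns_levelSetParam f hp,
        ih (f := Fin.init f) (hf.comp (Fin.castSucc_injective m)), ih (hf.restrict hg hp),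
        Module.Dual.finrank_ker_add_one_of_ne_zero hg, sum_range_succ_choose_succ]

end GeneralPosition

lemma natCard_connectedComponents_eq_natCard_range {X Y : Type*} [TopologicalSpace X]
    [TopologicalSpace Y] [TotallyDisconnectedSpace Y] {σ : X → Y} (hσ : Continuous σ)
    (hfib : ∀ x, IsPreconnected (σ ⁻¹' {σ x})) :
    Nat.card (ConnectedComponents X) = Nat.card (range σ) := by
  have hinj : Function.Injective hσ.connectedComponentsLift := by
    refine ConnectedComponents.surjective_coe.forall₂.2 fun x y h => ?_
    exact ConnectedComponents.coe_eq_coe'.2 ((hfib y).subset_connectedComponent rfl h)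
  have hrange : range hσ.connectedComponentsLift = range σ := by
    rw [← ConnectedComponents.surjective_coe.range_comp]
    rfl
  rw [Nat.card_congr (Equiv.ofInjective _ hinj), hrange]

theorem natCard_connectedComponents_eq_ncard_regionSigns [TopologicalSpace V] [ContinuousAdd V]
    [ContinuousSMul ℝ V] (f : ι → V →ᵃ[ℝ] ℝ) (hf : ∀ i, Continuous (f i)) :
    Nat.card (ConnectedComponents {x : V | ∀ i, f i x ≠ 0}) = (regionSigns f univ).ncard := by
  let σ : {x : V | ∀ i, f i x ≠ 0} → ι → SignType := fun x => signVector f x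
  have hσ : Continuous σ := continuous_pi fun i => continuous_iff_continuousAt.2 fun x =>
    (continuousAt_sign_of_ne_zero (x.2 i)).comp (f := fun y : {x : V | ∀ i, f i x ≠ 0} => f i y)
      ((hf i).comp continuous_subtype_val).continuousAt
  have hfib (x) : IsPreconnected (σ ⁻¹' {σ x}) := by
    have himage : Subtype.val '' (σ ⁻¹' {σ x}) = {y | signVector f y = σ x} := by
      ext y
      refine ⟨by rintro ⟨y, hy, rfl⟩; exact hy, fun hy => ⟨⟨y, fun i => ?_⟩, hy, rfl⟩⟩
      have := congrFun hy i
      simp only [signVector_apply, σ] at this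
      exact sign_ne_zero.1 (this ▸ sign_ne_zero.2 (x.2 i))
    rw [← Topology.IsInducing.subtypeVal.isPreconnected_image, himage]
    exact (convex_setOf_signVector_eq f (σ x)).isPreconnected
  rw [natCard_connectedComponents_eq_natCard_range hσ hfib, Nat.card_coe_set_eq]
  congr 1
  ext s
  constructor
  · rintro ⟨x, rfl⟩
    exact ⟨fun i => sign_ne_zero.2 (x.2 i), x, trivial, rfl⟩
  · rintro ⟨hs, x, -, rfl⟩
    exact ⟨⟨x, fun i => sign_ne_zero.1 (hs i)⟩, rfl⟩

section InnerProductSpace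

variable {E : Type*} [NormedAddCommGroup E] [InnerProductSpace ℝ E]

noncomputable def hyperplaneFunctional (a : E) (b : ℝ) : E →ᵃ[ℝ] ℝ where
  toFun x := ⟪a, x⟫ - b
  linear := innerₛₗ ℝ a
  map_vadd' x v := by
    simp only [vadd_eq_add, inner_add_right, innerₛₗ_apply_apply]
    ring

@[simp]
lemma hyperplaneFunctional_apply (a x : E) (b : ℝ) : hyperplaneFunctional a b x = ⟪a, x⟫ - b :=
  rfl

lemma natCard_connectedComponents_compl_hyperplanes (a : ι → E) (b : ι → ℝ) :
    Nat.card (ConnectedComponents {x : E // ∀ i, ⟪a i, x⟫ ≠ b i}) =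
      (regionSigns (fun i => hyperplaneFunctional (a i) (b i)) univ).ncard := by
  have : (fun x : E => ∀ i, ⟪a i, x⟫ ≠ b i) =
      fun x => ∀ i, hyperplaneFunctional (a i) (b i) x ≠ 0 := by
    simp [sub_ne_zero]
  rw [this]
  exact natCard_connectedComponents_eq_ncard_regionSigns _ fun i =>
    (continuous_const.inner continuous_id).sub continuous_const

end InnerProductSpace

lemma eq_zero_of_forall_sum_mul_pow_eq_zero {K : Type*} [Field K] {I : Finset ι} {t : ι → K}
    (ht : InjOn t I) {n : ℕ} (hI : I.card ≤ n) {c : ι → K}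
    (hc : ∀ k < n, ∑ i ∈ I, c i * t i ^ k = 0) : ∀ i ∈ I, c i = 0 := by
  classical
  intro i hi
  have hdeg : (Lagrange.basis I t i).natDegree < n := by
    have := Finset.card_pos.2 ⟨i, hi⟩
    rw [Lagrange.natDegree_basis ht hi]
    omega
  have key : ∑ j ∈ I, c j * (Lagrange.basis I t i).eval (t j) = 0 := by
    simp_rw [Polynomial.eval_eq_sum_range' hdeg, Finset.mul_sum, mul_left_comm (c _)]
    rw [Finset.sum_comm]
    refine Finset.sum_eq_zero fun k hk => ?_
    rw [← Finset.mul_sum, hc k (Finset.mem_range.1 hk), mul_zero]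
  rwa [Finset.sum_eq_single_of_mem i hi fun j hj hji => by
      rw [Lagrange.eval_basis_of_ne hji.symm hj, mul_zero],
    Lagrange.eval_basis_self ht hi, mul_one] at key

noncomputable def momentCurve (d : ℕ) (t : ℝ) : EuclideanSpace ℝ (Fin d) :=
  WithLp.toLp 2 fun k => t ^ (k + 1 : ℕ)

lemma momentCurve_ne_zero {d : ℕ} (hd : 0 < d) {t : ℝ} (ht : t ≠ 0) : momentCurve d t ≠ 0 := by
  intro h
  have := congrArg (fun v : EuclideanSpace ℝ (Fin d) => v ⟨0, hd⟩) h
  simp [momentCurve, ht] at this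

lemma inner_momentCurve_single {d : ℕ} (t : ℝ) (k : Fin d) :
    ⟪momentCurve d t, EuclideanSpace.single k 1⟫ = t ^ (k + 1 : ℕ) := by
  simp [EuclideanSpace.inner_single_right, momentCurve]

theorem inGeneralPosition_momentCurve {d m : ℕ} {t : Fin m → ℝ} (ht : Function.Injective t)
    (ht0 : ∀ i, t i ≠ 0) :
    InGeneralPosition fun i => hyperplaneFunctional (momentCurve d (t i)) 1 := by
  constructor
  · intro I hI
    rw [finrank_euclideanSpace_fin] at hI
    refine linearIndepOn_finset_iff.2 fun c hc => ?_
    have hmom (k : ℕ) (hk : k < d) : ∑ i ∈ I, (c i * t i) * t i ^ k = 0 := by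
      have := congrArg (fun φ : EuclideanSpace ℝ (Fin d) →ₗ[ℝ] ℝ =>
        φ (EuclideanSpace.single ⟨k, hk⟩ 1)) hc
      simpa [hyperplaneFunctional, inner_momentCurve_single, pow_succ, mul_assoc,
        mul_comm (t _)] using this
    intro i hi
    have := eq_zero_of_forall_sum_mul_pow_eq_zero ht.injOn hI hmom i hi
    exact (mul_eq_zero.1 this).resolve_right (ht0 i)
  · intro I hI
    rw [finrank_euclideanSpace_fin] at hI
    refine linearIndepOn_finset_iff.2 fun c hc => ?_
    have hval (x : EuclideanSpace ℝ (Fin d)) :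
        ∑ i ∈ I, c i * (⟪momentCurve d (t i), x⟫ - 1) = 0 := by
      simpa [sum_smul_apply] using
        congrArg (fun φ : EuclideanSpace ℝ (Fin d) →ᵃ[ℝ] ℝ => φ x) hc
    have hsum : ∑ i ∈ I, c i = 0 := by simpa using hval 0
    refine eq_zero_of_forall_sum_mul_pow_eq_zero ht.injOn hI ?_
    rintro (_ | k) hk
    · simpa using hsum
    · have := hval (EuclideanSpace.single ⟨k, by omega⟩ 1)
      simpa only [inner_momentCurve_single, mul_sub, mul_one, Finset.sum_sub_distrib, hsum,
        sub_zero] using this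

end HyperplaneArrangement

open HyperplaneArrangement

/-- The maximum number of connected components (regions) of the complement of `m`
hyperplanes in `ℝ^d` equals `∑_{j=0}^{d} C(m, j)`. -/
theorem max_regions_of_hyperplanes (d m : ℕ) (hd : 0 < d) :
    IsGreatest
      {n : ℕ | ∃ (a : Fin m → EuclideanSpace ℝ (Fin d)) (b : Fin m → ℝ),
        (∀ i, a i ≠ 0) ∧
        n = Nat.card
          (ConnectedComponents {x : EuclideanSpace ℝ (Fin d) // ∀ i, ⟪a i, x⟫ ≠ b i})}
      (∑ j ∈ Finset.range (d + 1), m.choose j) := by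
  have ht : Function.Injective fun i : Fin m => (i : ℝ) + 1 := fun i j h => by
    simpa [Fin.val_inj] using h
  have hgen := inGeneralPosition_momentCurve (d := d) ht fun i => by positivity
  refine ⟨⟨fun i => momentCurve d ((i : ℝ) + 1), fun _ => 1,
    fun i => momentCurve_ne_zero hd (by positivity), ?_⟩, ?_⟩
  · rw [natCard_connectedComponents_compl_hyperplanes, ncard_regionSigns_of_inGeneralPosition hgen,
      finrank_euclideanSpace_fin]
  · rintro n ⟨a, b, -, rfl⟩
    rw [natCard_connectedComponents_compl_hyperplanes]
    simpa using ncard_regionSigns_le (V := EuclideanSpace ℝ (Fin d)) _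
end

section
/- Suppose d : N → N satisfies lim_{k→∞} d(k)/(k/log k) = 0. Then the function k ↦ log G(d(k), binom(k,2)), where G(d, m) = Σ_{j=0}^{d} binom(m, j), is sub-linear: lim_{k→∞} log G(d(k), binom(k,2)) / k = 0. -/
open Filter

theorem log_regions_sublinear (d : ℕ → ℕ)
    (hd : Tendsto (fun k : ℕ => (d k : ℝ) / ((k : ℝ) / Real.log k)) atTop (nhds 0)) :
    Tendsto
      (fun k : ℕ =>
        Real.log (∑ j ∈ Finset.range (d k + 1), ((k.choose 2).choose j : ℝ)) / (k : ℝ))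
      atTop (nhds 0) := by
  have hu : Tendsto (fun k : ℕ => 3 * ((d k : ℝ) * Real.log k / (k : ℝ))) atTop (nhds 0) := by
    have h3 := hd.const_mul (3:ℝ)
    rw [mul_zero] at h3
    refine h3.congr fun k => ?_
    rw [div_div_eq_mul_div]
  refine tendsto_of_tendsto_of_tendsto_of_le_of_le' tendsto_const_nhds hu ?_ ?_
  · -- lower bound: 0 ≤ f k eventually
    filter_upwards [eventually_gt_atTop 0] with k hk
    apply div_nonneg _ (by positivity)
    apply Real.log_nonneg
    calc (1 : ℝ) = ((k.choose 2).choose 0 : ℝ) := by simp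
      _ ≤ _ := Finset.single_le_sum (f := fun j => (((k.choose 2).choose j : ℕ) : ℝ))
          (fun i _ => by positivity) (Finset.mem_range.mpr (Nat.succ_pos _))
  · -- upper bound
    filter_upwards [eventually_ge_atTop 3] with k hk
    have hk1 : (1:ℝ) ≤ (k:ℝ) := by exact_mod_cast (show 1 ≤ k by omega)
    have hk0 : (k:ℝ) ≠ 0 := by positivity
    have hlogk : (1:ℝ) ≤ Real.log k := by
      rw [show (1:ℝ) = Real.log (Real.exp 1) by simp]
      apply Real.log_le_log (Real.exp_pos 1)
      calc Real.exp 1 ≤ 3 := by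
            have := Real.exp_one_lt_d9; linarith
        _ ≤ (k:ℝ) := by exact_mod_cast hk
    have hS : (∑ j ∈ Finset.range (d k + 1), ((k.choose 2).choose j : ℝ))
        ≤ (d k + 1 : ℝ) * ((k:ℝ)^2) ^ (d k) := by
      have hterm : ∀ j ∈ Finset.range (d k + 1),
          ((k.choose 2).choose j : ℝ) ≤ ((k:ℝ)^2) ^ (d k) := by
        intro j hj
        have hj' : j ≤ d k := Nat.lt_succ_iff.mp (Finset.mem_range.mp hj)
        have h1 : ((k.choose 2).choose j : ℝ) ≤ ((k.choose 2 : ℕ) : ℝ) ^ j := by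
          exact_mod_cast Nat.choose_le_pow (k.choose 2) j
        have h2 : ((k.choose 2 : ℕ) : ℝ) ≤ (k:ℝ)^2 := by
          have : k.choose 2 ≤ k ^ 2 := Nat.choose_le_pow k 2
          exact_mod_cast this
        calc ((k.choose 2).choose j : ℝ) ≤ ((k.choose 2 : ℕ) : ℝ) ^ j := h1
          _ ≤ ((k:ℝ)^2) ^ j := by
              apply pow_le_pow_left₀ (by positivity) h2
          _ ≤ ((k:ℝ)^2) ^ (d k) := by
              apply pow_le_pow_right₀ (by nlinarith) hj'
      calc (∑ j ∈ Finset.range (d k + 1), ((k.choose 2).choose j : ℝ))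
          ≤ ∑ j ∈ Finset.range (d k + 1), ((k:ℝ)^2) ^ (d k) :=
            Finset.sum_le_sum hterm
        _ = (d k + 1 : ℝ) * ((k:ℝ)^2) ^ (d k) := by
            rw [Finset.sum_const, Finset.card_range]; push_cast; ring
    have hS1 : (1:ℝ) ≤ (∑ j ∈ Finset.range (d k + 1), ((k.choose 2).choose j : ℝ)) := by
      calc (1 : ℝ) = ((k.choose 2).choose 0 : ℝ) := by simp
        _ ≤ _ := Finset.single_le_sum (f := fun j => (((k.choose 2).choose j : ℕ) : ℝ))
            (fun i _ => by positivity) (Finset.mem_range.mpr (Nat.succ_pos _))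
    have hlogS : Real.log (∑ j ∈ Finset.range (d k + 1), ((k.choose 2).choose j : ℝ))
        ≤ Real.log (d k + 1 : ℝ) + (d k : ℝ) * (2 * Real.log k) := by
      calc Real.log (∑ j ∈ Finset.range (d k + 1), ((k.choose 2).choose j : ℝ))
          ≤ Real.log ((d k + 1 : ℝ) * ((k:ℝ)^2) ^ (d k)) := by
            apply Real.log_le_log (by linarith) hS
        _ = Real.log (d k + 1 : ℝ) + (d k : ℝ) * (2 * Real.log k) := by
            rw [Real.log_mul (by positivity) (pow_ne_zero _ (pow_ne_zero _ hk0)), Real.log_pow, Real.log_pow]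
            push_cast; ring
    have hlogd : Real.log (d k + 1 : ℝ) ≤ (d k : ℝ) * Real.log k := by
      calc Real.log (d k + 1 : ℝ) ≤ (d k + 1 : ℝ) - 1 := by
            have := Real.add_one_le_exp (Real.log (d k + 1 : ℝ))
            rw [Real.exp_log (by positivity)] at this
            linarith
        _ = (d k : ℝ) := by ring
        _ = (d k : ℝ) * 1 := by ring
        _ ≤ (d k : ℝ) * Real.log k := by
            apply mul_le_mul_of_nonneg_left hlogk (by positivity)
    rw [div_le_iff₀ (by linarith)]
    calc Real.log (∑ j ∈ Finset.range (d k + 1), ((k.choose 2).choose j : ℝ))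
        ≤ (d k : ℝ) * Real.log k + (d k : ℝ) * (2 * Real.log k) := by linarith
      _ = 3 * ((d k : ℝ) * Real.log k) := by ring
      _ = 3 * ((d k : ℝ) * Real.log k / (k:ℝ)) * k := by
          field_simp
end

section
/- If d : N → N grows strictly slower than k/log k (i.e., d(k)·(log k)/k → 0), then for every ν > 0, G(d(k), binom(k,2)) / exp(ν·k) → 0 as k → ∞, where G(d,m) = Σ_{j=0}^{d} binom(m,j). -/
open Filter

lemma sum_bound_aux (k D : ℕ) (hk : 1 ≤ k) :
    (∑ j ∈ Finset.range (D + 1), ((k.choose 2).choose j : ℝ)) ≤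
      ((D : ℝ) + 1) * (k : ℝ) ^ (2 * D) := by
  have h : ∀ j ∈ Finset.range (D + 1),
      ((k.choose 2).choose j : ℝ) ≤ (k : ℝ) ^ (2 * D) := by
    intro j hj
    have h1 : (k.choose 2).choose j ≤ k ^ (2 * D) := by
      calc (k.choose 2).choose j ≤ (k.choose 2) ^ j := Nat.choose_le_pow _ _
        _ ≤ (k ^ 2) ^ j := Nat.pow_le_pow_left (Nat.choose_le_pow _ _) j
        _ ≤ (k ^ 2) ^ D :=
            Nat.pow_le_pow_right (Nat.one_le_pow _ _ hk)
              (Finset.mem_range_succ_iff.mp hj)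
        _ = k ^ (2 * D) := by rw [← pow_mul]
    exact_mod_cast h1
  calc (∑ j ∈ Finset.range (D + 1), ((k.choose 2).choose j : ℝ))
      ≤ (Finset.range (D + 1)).card • ((k : ℝ) ^ (2 * D)) :=
        Finset.sum_le_card_nsmul _ _ _ h
    _ = ((D : ℝ) + 1) * (k : ℝ) ^ (2 * D) := by
        rw [Finset.card_range, nsmul_eq_mul]
        push_cast
        ring

theorem regions_subexponential (d : ℕ → ℕ)
    (hd : Tendsto (fun k : ℕ => (d k : ℝ) * Real.log k / (k : ℝ)) atTop (nhds 0)) :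
    ∀ ν : ℝ, 0 < ν →
      Tendsto
        (fun k : ℕ =>
          (∑ j ∈ Finset.range (d k + 1), ((k.choose 2).choose j : ℝ)) /
            Real.exp (ν * k))
        atTop (nhds 0) := by
  intro ν hν
  set c : ℕ → ℝ := fun k =>
    Real.log ((d k : ℝ) + 1) / k + 2 * ((d k : ℝ) * Real.log k / k) - ν with hc
  have hlog : Tendsto (fun k : ℕ => Real.log ((d k : ℝ) + 1) / k) atTop (nhds 0) := by
    apply squeeze_zero' ?_ ?_ hd
    · filter_upwards [eventually_ge_atTop 1] with k hk
      have : (1 : ℝ) ≤ (d k : ℝ) + 1 := by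
        have := Nat.cast_nonneg (α := ℝ) (d k)
        linarith
      have := Real.log_nonneg this
      positivity
    · filter_upwards [eventually_ge_atTop 3] with k hk
      have hk0 : (0 : ℝ) < k := by
        have : (3 : ℝ) ≤ k := by exact_mod_cast hk
        linarith
      have hlogk : 1 ≤ Real.log k := by
        rw [Real.le_log_iff_exp_le hk0]
        calc Real.exp 1 ≤ 2.7182818286 := Real.exp_one_lt_d9.le
          _ ≤ 3 := by norm_num
          _ ≤ k := by exact_mod_cast hk
      have h1 : Real.log ((d k : ℝ) + 1) ≤ (d k : ℝ) := by
        have := Real.log_le_sub_one_of_pos (x := (d k : ℝ) + 1) (by positivity)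
        linarith
      have h2 : Real.log ((d k : ℝ) + 1) ≤ (d k : ℝ) * Real.log k := by
        calc Real.log ((d k : ℝ) + 1) ≤ (d k : ℝ) := h1
          _ = (d k : ℝ) * 1 := (mul_one _).symm
          _ ≤ (d k : ℝ) * Real.log k := by
              exact mul_le_mul_of_nonneg_left hlogk (by positivity)
      gcongr
  have hclim : Tendsto c atTop (nhds (0 + 2 * 0 - ν)) :=
    (hlog.add (hd.const_mul 2)).sub tendsto_const_nhds
  have hneg : 0 + 2 * 0 - ν < 0 := by linarith
  have hE : Tendsto (fun k : ℕ => c k * k) atTop atBot :=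
    Tendsto.neg_mul_atTop hneg hclim tendsto_natCast_atTop_atTop
  have hexp : Tendsto (fun k : ℕ => Real.exp (c k * k)) atTop (nhds 0) :=
    Real.tendsto_exp_atBot.comp hE
  apply squeeze_zero' ?_ ?_ hexp
  · filter_upwards with k
    have h0 : (0 : ℝ) ≤ ∑ j ∈ Finset.range (d k + 1), ((k.choose 2).choose j : ℝ) :=
      Finset.sum_nonneg fun j _ => by positivity
    positivity
  · filter_upwards [eventually_ge_atTop 1] with k hk
    have hk0 : (0 : ℝ) < k := by
      have : (1 : ℝ) ≤ k := by exact_mod_cast hk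
      linarith
    have hB := sum_bound_aux k (d k) hk
    have h2 : c k * k = Real.log ((d k : ℝ) + 1) + ((2 * d k : ℕ) : ℝ) * Real.log k - ν * k := by
      simp only [hc]
      push_cast
      field_simp
    have hEq : Real.exp (c k * k) =
        ((d k : ℝ) + 1) * (k : ℝ) ^ (2 * d k) / Real.exp (ν * k) := by
      rw [h2, Real.exp_sub, Real.exp_add, Real.exp_log (by positivity), Real.exp_nat_mul,
        Real.exp_log hk0]
    rw [hEq]
    gcongr
end

section
/- There is no sequence of widths d(k) with lim_{k→∞} d(k)/(k/log k) = 0 such that for every k there exists a matrix W ∈ R^{k × d(k)} with rows w_1,...,w_k and, for every l ∈ {0,...,2^k−1}, a vector x_l ∈ R^{d(k)} satisfying w_{t1}^T x_l > w_{t0}^T x_l whenever bit t1 of l is 1 and bit t0 of l is 0. Equivalently, for all sufficiently large k, no linear map R^{d(k)} → R^k can realize all 2^k such subset-separation constraints. -/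
open Filter

/-!
If a linear map separates every subset of its `k` output coordinates from the complementary
subset, its rows `w_t` are affinely independent: given an affine relation `∑ g_t w_t = 0`,
`∑ g_t = 0`, evaluate it at an input `x` separating `{t | g_t > 0}` from the rest and shift
the logits by the smallest logit `c` on that set; every term of `∑ g_t (w_t·x - c) = 0` is then
nonnegative, and those with `g_t < 0` are positive, so `g = 0`. Hence `k ≤ d(k) + 1`, which is
incompatible with `d(k) = o(k / log k)`.
-/

theorem Finset.eq_zero_of_sum_eq_zero_of_sum_mul_eq_zero {ι R : Type*} [CommRing R]
    [LinearOrder R] [IsStrictOrderedRing R] {s : Finset ι} {w y : ι → R}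
    (hw : ∑ i ∈ s, w i = 0) (hwy : ∑ i ∈ s, w i * y i = 0)
    (hy : ∀ i ∈ s, ∀ j ∈ s, w i ≤ 0 → 0 < w j → y i < y j) :
    ∀ i ∈ s, w i = 0 := by
  by_contra! ⟨i₀, hi₀, hne⟩
  obtain ⟨j₀, hj₀, hpos⟩ := exists_pos_of_sum_zero_of_exists_nonzero w hw ⟨i₀, hi₀, hne⟩
  obtain ⟨n, hn, hneg⟩ : ∃ n ∈ s, w n < 0 := by
    obtain ⟨n, hn, h⟩ := exists_pos_of_sum_zero_of_exists_nonzero (-w)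
      (by simp [Finset.sum_neg_distrib, hw]) ⟨i₀, hi₀, by simpa using hne⟩
    exact ⟨n, hn, by simpa using h⟩
  obtain ⟨m, hm, hmin⟩ :=
    (s.filter (0 < w ·)).exists_min_image y ⟨j₀, by simp [hj₀, hpos]⟩
  rw [Finset.mem_filter] at hm
  have hshift : ∑ i ∈ s, w i * (y i - y m) = 0 := by
    simp only [mul_sub, Finset.sum_sub_distrib, ← Finset.sum_mul, hw, hwy, zero_mul, sub_zero]
  refine hshift.not_gt (Finset.sum_pos' (fun i hi => ?_) ⟨n, hn, ?_⟩)
  · rcases lt_or_ge 0 (w i) with hwi | hwi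
    · exact mul_nonneg hwi.le (sub_nonneg.2 (hmin i (by simp [hi, hwi])))
    · exact mul_nonneg_of_nonpos_of_nonpos hwi (sub_nonpos.2 (hy i hi m hm.1 hwi hm.2).le)
  · exact mul_pos_of_neg_of_neg hneg (sub_neg.2 (hy n hn m hm.1 hneg.le hm.2))

theorem affineIndependent_of_forall_exists_dual_separating {ι R E : Type*} [CommRing R]
    [LinearOrder R] [IsStrictOrderedRing R] [AddCommGroup E] [Module R E] {p : ι → E}
    (h : ∀ S : Set ι, ∃ φ : Module.Dual R E, ∀ i ∉ S, ∀ j ∈ S, φ (p i) < φ (p j)) :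
    AffineIndependent R p := by
  refine affineIndependent_iff.2 fun s w hw hwp => ?_
  obtain ⟨φ, hφ⟩ := h {i | 0 < w i}
  refine Finset.eq_zero_of_sum_eq_zero_of_sum_mul_eq_zero hw ?_
    fun i _ j _ hi hj => hφ i (not_lt.2 hi) j hj
  simpa [map_sum, smul_eq_mul] using congrArg φ hwp

theorem Nat.exists_lt_two_pow_testBit_iff {k : ℕ} (S : Set (Fin k)) :
    ∃ l < 2 ^ k, ∀ t : Fin k, l.testBit t = true ↔ t ∈ S := by
  classical
  let f : Fin k → Fin 2 := fun t => if t ∈ S then 1 else 0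
  refine ⟨finFunctionFinEquiv f, (finFunctionFinEquiv f).isLt, fun t => ?_⟩
  have hbit := finFunctionFinEquiv_symm_apply_val (finFunctionFinEquiv f) t
  rw [Equiv.symm_apply_apply] at hbit
  rw [Nat.testBit_eq_decide_div_mod_eq, ← hbit]
  by_cases ht : t ∈ S <;> simp [f, ht]

theorem le_succ_of_forall_testBit_separated {k d : ℕ} (W : Fin k → Fin d → ℝ)
    (h : ∀ l < 2 ^ k, ∃ x : Fin d → ℝ, ∀ t0 t1 : Fin k, l.testBit t0 = false →
      l.testBit t1 = true → ∑ j, W t0 j * x j < ∑ j, W t1 j * x j) :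
    k ≤ d + 1 := by
  have hW : AffineIndependent ℝ W := by
    refine affineIndependent_of_forall_exists_dual_separating fun S => ?_
    obtain ⟨l, hl, hlS⟩ := Nat.exists_lt_two_pow_testBit_iff S
    obtain ⟨x, hx⟩ := h l hl
    refine ⟨(dotProductBilin ℝ ℝ).flip x, fun i hi j hj => ?_⟩
    have hi' : l.testBit i = false := Bool.eq_false_iff.2 fun hl => hi ((hlS i).1 hl)
    simpa [dotProduct] using hx i j hi' ((hlS j).2 hj)
  simpa using hW.card_le_finrank_succ.trans (Nat.add_le_add_right (Submodule.finrank_le _) 1)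

theorem one_le_div_div_log_of_le_succ {k d : ℕ} (hk : 9 ≤ k) (hkd : k ≤ d + 1) :
    1 ≤ (d : ℝ) / (k / Real.log k) := by
  have hk' : (9 : ℝ) ≤ k := by exact_mod_cast hk
  have hkd' : (k : ℝ) ≤ d + 1 := by exact_mod_cast hkd
  have hlog : 2 ≤ Real.log k := by
    rw [Real.le_log_iff_exp_le (by positivity)]
    calc Real.exp 2 = Real.exp 1 ^ 2 := by rw [← Real.exp_nat_mul]; norm_num
      _ ≤ 3 ^ 2 := by gcongr; exact Real.exp_one_lt_three.le
      _ ≤ k := by linarith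
  rw [le_div_iff₀ (by positivity), one_mul, div_le_iff₀ (by linarith)]
  nlinarith

/-- No width sequence `d k = o(k / log k)` admits, for every `k`, a linear map
`ℝ^{d k} → ℝ^k` (given by the rows `W t`) realizing all `2^k` subset-separation
constraints: for each `l < 2^k` some input `x_l` on which every coordinate whose
bit in `l` is `1` gets a strictly larger logit than every coordinate whose bit is `0`. -/
theorem no_sublinear_width_separates :
    ¬ ∃ d : ℕ → ℕ,
      Tendsto (fun k : ℕ => (d k : ℝ) / ((k : ℝ) / Real.log k)) atTop (nhds 0) ∧
      ∀ k : ℕ, ∃ W : Fin k → Fin (d k) → ℝ,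
        ∀ l < 2 ^ k, ∃ x : Fin (d k) → ℝ,
          ∀ t0 t1 : Fin k, l.testBit t0 = false → l.testBit t1 = true →
            ∑ j, W t0 j * x j < ∑ j, W t1 j * x j := by
  rintro ⟨d, hd, hsep⟩
  obtain ⟨k, hk_lt, hk⟩ := ((hd.eventually_lt_const one_pos).and (eventually_ge_atTop 9)).exists
  obtain ⟨W, hW⟩ := hsep k
  exact (one_le_div_div_log_of_le_succ hk (le_succ_of_forall_testBit_separated W hW)).not_gt hk_lt
end
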